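/- Let G be a non-bipartite graph with (2r+1)/(2s+1) < og(G) and (2r+1)(2p+1)/((2s+1)(2q+1)) < og(G). Then there exists a homomorphism from (G^{(2r+1)/(2s+1)})^{(2p+1)/(2q+1)} to G^{(2r+1)(2p+1)/((2s+1)(2q+1))}. -/

import Mathlib

structure OGraph where
  V : Type
  Adj : V → V → Prop
  symm : ∀ u v, Adj u v → Adj v u

namespace OGraph

/-- There is a walk of length exactly `n` from `u` to `v`. -/
def walkLen (G : OGraph) : ℕ → G.V → G.V → Prop
  | 0, u, v => u = v
  | n+1, u, v => ∃ w, G.Adj u w ∧ G.walkLen n w v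

theorem walkLen_concat (G : OGraph) : ∀ (n : ℕ) (u v w : G.V),
    G.walkLen n u v → G.Adj v w → G.walkLen (n+1) u w := by
  intro n
  induction n with
  | zero =>
      intro u v w h hadj
      cases h
      exact ⟨w, hadj, rfl⟩
  | succ n ih =>
      rintro u v w ⟨x, hux, hxv⟩ hadj
      exact ⟨x, hux, ih x v w hxv hadj⟩

theorem walkLen_symm (G : OGraph) : ∀ (n : ℕ) (u v : G.V),
    G.walkLen n u v → G.walkLen n v u := by
  intro n
  induction n with
  | zero => intro u v h; exact h.symm
  | succ n ih =>
      rintro u v ⟨w, huw, hwv⟩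
      exact G.walkLen_concat n v w u (ih w v hwv) (G.symm u w huw)

/-- The `k`-th power of a graph: same vertices, adjacency = existence of a
walk of length exactly `k` (loops allowed). -/
def pow (G : OGraph) (k : ℕ) : OGraph where
  V := G.V
  Adj u v := G.walkLen k u v
  symm := G.walkLen_symm k

/-- Existence of a graph homomorphism. -/
def homTo (G H : OGraph) : Prop :=
  ∃ f : G.V → H.V, ∀ u v, G.Adj u v → H.Adj (f u) (f v)

/-- The `(2s+1)`-subdivision `S_{2s+1}(G)`: every edge is replaced by a path
of length `2s+1`.  Following the paper's notation, the ordered pair `(u,v)`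
(with `u ~ v`) carries the `s` inner vertices `(uv)_1, …, (uv)_s`. -/
def subdiv (G : OGraph) (s : ℕ) : OGraph where
  V := G.V ⊕ ({p : G.V × G.V // G.Adj p.1 p.2} × Fin s)
  Adj x y :=
    match x, y with
    | Sum.inl u, Sum.inl v => s = 0 ∧ G.Adj u v
    | Sum.inl u, Sum.inr (e, k) => u = e.1.2 ∧ (k : ℕ) = s - 1
    | Sum.inr (e, k), Sum.inl u => u = e.1.2 ∧ (k : ℕ) = s - 1
    | Sum.inr (e, k), Sum.inr (e', l) =>
        e'.1.1 = e.1.2 ∧ e'.1.2 = e.1.1 ∧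
        ((k : ℕ) + (l : ℕ) + 2 = s ∨ (k : ℕ) + (l : ℕ) + 2 = s + 1)
  symm := by
    rintro (u | ⟨e, k⟩) (v | ⟨e', l⟩) h
    · exact ⟨h.1, G.symm _ _ h.2⟩
    · exact h
    · exact h
    · obtain ⟨h1, h2, h3⟩ := h
      exact ⟨h2.symm, h1.symm, by omega⟩

/-- `q < og(G)`: the rational `q` is smaller than the odd girth of `G`
(the length of a shortest odd closed walk; vacuously true if `G` is bipartite). -/
def ltOddGirth (G : OGraph) (q : ℚ) : Prop :=
  ∀ n : ℕ, Odd n → (∃ v, G.walkLen n v v) → q < (n : ℚ)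

/-- A graph is non-bipartite iff it contains an odd closed walk. -/
def Nonbipartite (G : OGraph) : Prop :=
  ∃ (n : ℕ) (v : G.V), Odd n ∧ G.walkLen n v v

/-- The odd girth, as an extended natural number (`⊤` for bipartite graphs). -/
noncomputable def oddGirth (G : OGraph) : ℕ∞ :=
  sInf {N : ℕ∞ | ∃ n : ℕ, N = (n : ℕ∞) ∧ Odd n ∧ ∃ v, G.walkLen n v v}

/-- The complete graph on `m` vertices. -/
def completeGraph (m : ℕ) : OGraph :=
  ⟨Fin m, fun u v => u ≠ v, fun _ _ h => h.symm⟩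

/-- The chromatic number: least `m` such that `G` maps homomorphically to `K_m`. -/
noncomputable def chromatic (G : OGraph) : ℕ :=
  sInf {m : ℕ | G.homTo (completeGraph m)}

/-- The `i`-th power thickness
`θ_i(G) = sup { (2r+1)/(2s+1) | χ(G^{(2r+1)/(2s+1)}) ≤ χ(G)+i, (2r+1)/(2s+1) < og(G) }`. -/
noncomputable def powerThickness (G : OGraph) (i : ℤ) : ℝ :=
  sSup {x : ℝ | ∃ r s : ℕ, x = (2*(r:ℝ)+1)/(2*(s:ℝ)+1) ∧
    ((((G.subdiv s).pow (2*r+1)).chromatic : ℤ) ≤ (G.chromatic : ℤ) + i) ∧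
    G.ltOddGirth ((2*(r:ℚ)+1)/(2*(s:ℚ)+1))}

/-- The graph `H^{-1/(2r+1)}`. -/
def negPow (H : OGraph) (r : ℕ) : OGraph where
  V := {A : Fin (r+1) → Set H.V //
        (∃ v, A 0 = {v}) ∧
        ∀ i : Fin (r+1), (A i).Nonempty ∧ A i ⊆ {u | ∃ v ∈ A 0, H.walkLen i v u}}
  Adj A B :=
    (∀ i j : Fin (r+1), (j : ℕ) = (i : ℕ) + 1 → A.1 i ⊆ B.1 j ∧ B.1 i ⊆ A.1 j) ∧
    ∀ j : Fin (r+1), ∀ a ∈ A.1 j, ∀ b ∈ B.1 j, H.Adj a b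
  symm := by
    rintro A B ⟨h1, h2⟩
    exact ⟨fun i j hij => ⟨(h1 i j hij).2, (h1 i j hij).1⟩,
           fun j b hb a ha => H.symm _ _ (h2 j a ha b hb)⟩

/-- The circular complete graph `K_{n/d}`. -/
def circGraph (n d : ℕ) : OGraph where
  V := Fin n
  Adj u v := (d : ℤ) ≤ |(u : ℤ) - (v : ℤ)| ∧ |(u : ℤ) - (v : ℤ)| ≤ (n : ℤ) - d
  symm := by
    intro u v h
    rwa [abs_sub_comm]

/-- The circular chromatic number, as a real number. -/
noncomputable def circChrom (G : OGraph) : ℝ :=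
  sInf {x : ℝ | ∃ n d : ℕ, 0 < d ∧ 2 * d ≤ n ∧ Nat.gcd n d = 1 ∧
    x = (n : ℝ) / (d : ℝ) ∧ G.homTo (circGraph n d)}

/-- The cycle on `m` vertices. -/
def cycleGraph (m : ℕ) : OGraph :=
  ⟨ZMod m, fun i j => i = j + 1 ∨ j = i + 1, fun _ _ h => h.symm⟩

/-- Graph isomorphism. -/
def Isom (G H : OGraph) : Prop :=
  ∃ f : G.V ≃ H.V, ∀ u v, G.Adj u v ↔ H.Adj (f u) (f v)

/-- The helical graph `H(m,n,k)`. -/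
def helical (m n k : ℕ) : OGraph where
  V := {A : Fin k → Set (Fin m) //
        (∀ h : 0 < k, (A ⟨0, h⟩).ncard = n) ∧
        (∀ i, n ≤ (A i).ncard) ∧
        (∀ i : Fin k, ∀ h : (i : ℕ) + 1 < k, A i ∩ A ⟨(i : ℕ) + 1, h⟩ = ∅) ∧
        (∀ i : Fin k, ∀ h : (i : ℕ) + 2 < k, A i ⊆ A ⟨(i : ℕ) + 2, h⟩)}
  Adj A B :=
    (∀ i, A.1 i ∩ B.1 i = ∅) ∧
    (∀ i : Fin k, ∀ h : (i : ℕ) + 1 < k,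
      A.1 i ⊆ B.1 ⟨(i : ℕ) + 1, h⟩ ∧ B.1 i ⊆ A.1 ⟨(i : ℕ) + 1, h⟩)
  symm := by
    rintro A B ⟨h1, h2⟩
    refine ⟨fun i => ?_, fun i h => ⟨(h2 i h).2, (h2 i h).1⟩⟩
    rw [Set.inter_comm]
    exact h1 i

/-- A graph with chromatic number `k` is colorful if every proper `k`-coloring
admits a (nonempty) induced subgraph all of whose vertices see all `k` colors in
their closed neighborhood. -/
def Colorful (G : OGraph) : Prop :=
  ∀ c : G.V → Fin G.chromatic, (∀ u v, G.Adj u v → c u ≠ c v) →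
    ∃ S : Set G.V, S.Nonempty ∧
      ∀ v ∈ S, ∀ col : Fin G.chromatic,
        ∃ u ∈ S, (u = v ∨ G.Adj v u) ∧ c u = col

end OGraph

open OGraph

/-!
Write `H = S_{2s+1}(G)^{2r+1}` and `K = S_{(2s+1)(2q+1)}(G)`. Stretching every subdivided edge
by the factor `2q+1` maps `S_{2s+1}(G)` to `K^{2q+1}`, hence `H` to `K^{(2r+1)(2q+1)}`. The
hypothesis `(2r+1)/(2s+1) < og(G)` makes `H` loopless: an odd closed walk of length `m` in
`S_{2s+1}(G)` runs through branch vertices and projects to an odd closed walk of `G` of length at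
most `m/(2s+1)`. For a loopless graph, sending every edge to a walk of length `(2q+1)(2r+1)` and
cutting these walks into `2q+1` pieces (each edge oriented once, so that both arcs of an edge use
the same walk) gives a homomorphism `S_{2q+1}(H) → K^{2r+1}`; its `(2p+1)`-th power is the claim.
If `G` has a loop, so does `K`, and a constant map works.
-/

namespace OGraph

variable {G H K : OGraph}

theorem walkLen_add {m n : ℕ} {u w : G.V} :
    G.walkLen (m + n) u w ↔ ∃ v, G.walkLen m u v ∧ G.walkLen n v w := by
  induction m generalizing u with
  | zero => simp [walkLen]
  | succ m ih =>
    rw [Nat.succ_add]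
    simp only [walkLen, ih]
    constructor
    · rintro ⟨x, hux, v, hxv, hvw⟩
      exact ⟨v, ⟨x, hux, hxv⟩, hvw⟩
    · rintro ⟨v, ⟨x, hux, hxv⟩, hvw⟩
      exact ⟨x, hux, v, hxv, hvw⟩

theorem walkLen_of_adj_succ (g : ℕ → G.V) (a : ℕ) :
    ∀ d, (∀ j, a ≤ j → j < a + d → G.Adj (g j) (g (j + 1))) → G.walkLen d (g a) (g (a + d))
  | 0, _ => rfl
  | d + 1, h => G.walkLen_concat d _ _ _
      (walkLen_of_adj_succ g a d fun j hj hjd => h j hj (by omega)) (h (a + d) (by omega) (by omega))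

theorem exists_adj_succ_of_walkLen : ∀ {n : ℕ} {u v : G.V}, G.walkLen n u v →
    ∃ g : ℕ → G.V, g 0 = u ∧ g n = v ∧ ∀ j < n, G.Adj (g j) (g (j + 1))
  | 0, u, _, h => ⟨fun _ => u, rfl, h, fun _ hj => absurd hj (Nat.not_lt_zero _)⟩
  | _ + 1, u, _, ⟨_, huw, hwv⟩ => by
    obtain ⟨g, rfl, hgn, hg⟩ := exists_adj_succ_of_walkLen hwv
    refine ⟨fun | 0 => u | j + 1 => g j, rfl, hgn, ?_⟩
    rintro (_ | j) hj
    · exact huw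
    · exact hg j (by omega)

theorem walkLen_map {f : G.V → H.V} (hf : ∀ u v, G.Adj u v → H.Adj (f u) (f v)) :
    ∀ {n : ℕ} {u v : G.V}, G.walkLen n u v → H.walkLen n (f u) (f v)
  | 0, _, _, h => congrArg f h
  | _ + 1, _, _, ⟨w, huw, hwv⟩ => ⟨f w, hf _ _ huw, walkLen_map hf hwv⟩

theorem walkLen_mul_of_walkLen_pow {m : ℕ} :
    ∀ {n : ℕ} {u v : G.V}, (G.pow m).walkLen n u v → G.walkLen (m * n) u v
  | 0, _, _, h => h
  | _ + 1, _, _, ⟨w, huw, hwv⟩ => by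
    rw [Nat.mul_succ, Nat.add_comm]
    exact walkLen_add.2 ⟨w, huw, walkLen_mul_of_walkLen_pow hwv⟩

theorem walkLen_pow_of_walkLen_mul {m : ℕ} :
    ∀ {n : ℕ} {u v : G.V}, G.walkLen (m * n) u v → (G.pow m).walkLen n u v
  | 0, _, _, h => h
  | _ + 1, _, _, h => by
    rw [Nat.mul_succ, Nat.add_comm] at h
    obtain ⟨w, huw, hwv⟩ := walkLen_add.1 h
    exact ⟨w, huw, walkLen_pow_of_walkLen_mul hwv⟩

theorem homTo.trans (h₁ : G.homTo H) (h₂ : H.homTo K) : G.homTo K :=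
  let ⟨f, hf⟩ := h₁
  let ⟨g, hg⟩ := h₂
  ⟨g ∘ f, fun _ _ h => hg _ _ (hf _ _ h)⟩

theorem homTo.pow (h : G.homTo H) (n : ℕ) : (G.pow n).homTo (H.pow n) :=
  let ⟨f, hf⟩ := h
  ⟨f, fun _ _ => walkLen_map hf⟩

theorem pow_pow_homTo (m n : ℕ) : ((G.pow m).pow n).homTo (G.pow (m * n)) :=
  ⟨id, fun _ _ => walkLen_mul_of_walkLen_pow⟩

theorem pow_pow_homTo_pow_pow (m n : ℕ) : ((G.pow m).pow n).homTo ((G.pow n).pow m) :=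
  ⟨id, fun _ _ h => walkLen_pow_of_walkLen_mul (Nat.mul_comm m n ▸ walkLen_mul_of_walkLen_pow h)⟩

theorem pow_adj_self {z : G.V} (hz : G.Adj z z) : ∀ n, (G.pow n).Adj z z
  | 0 => rfl
  | n + 1 => ⟨z, hz, pow_adj_self hz n⟩

theorem homTo_of_adj_self {z : H.V} (hz : H.Adj z z) : G.homTo H :=
  ⟨fun _ => z, fun _ _ _ => hz⟩

abbrev Arc (G : OGraph) := {p : G.V × G.V // G.Adj p.1 p.2}

def Arc.reverse (e : G.Arc) : G.Arc := ⟨e.1.swap, G.symm _ _ e.2⟩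

@[simp] theorem Arc.reverse_val (e : G.Arc) : e.reverse.1 = e.1.swap := rfl

@[simp] theorem Arc.reverse_reverse (e : G.Arc) : e.reverse.reverse = e := rfl

theorem exists_subdiv_adj_self {x : G.V} (hx : G.Adj x x) : ∀ t, ∃ z, (G.subdiv t).Adj z z
  | 0 => ⟨.inl x, rfl, hx⟩
  | t + 1 => ⟨.inr (⟨(x, x), hx⟩, ⟨t / 2, by omega⟩), rfl, rfl, by simp only; omega⟩

/-- The vertex at distance `d` from `e.1.1` on the path of length `2T+1` replacing `e`:
`(e, k)` lies at distance `2k+2` from `e.1.1`, and `(e.reverse, k)` at distance `2k+2` from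
`e.1.2`. -/
def edgePath (T : ℕ) (e : G.Arc) (d : ℕ) : G.V ⊕ G.Arc × Fin T :=
  if _ : d = 0 then .inl e.1.1
  else if _ : 2 * T + 1 ≤ d then .inl e.1.2
  else if d % 2 = 0 then .inr (e, ⟨d / 2 - 1, by omega⟩)
  else .inr (e.reverse, ⟨(2 * T - 1 - d) / 2, by omega⟩)

theorem edgePath_of_le {T d : ℕ} (e : G.Arc) (hd : 2 * T + 1 ≤ d) :
    edgePath T e d = .inl e.1.2 := by
  simp [edgePath, hd, show d ≠ 0 by omega]

theorem edgePath_cases {T d : ℕ} (e : G.Arc) (hd : d ≤ 2 * T + 1) :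
    edgePath T e d = .inl e.1.1 ∧ d = 0 ∨ edgePath T e d = .inl e.1.2 ∧ d = 2 * T + 1 ∨
      (∃ k : Fin T, edgePath T e d = .inr (e, k) ∧ d = 2 * k + 2) ∨
      ∃ k : Fin T, edgePath T e d = .inr (e.reverse, k) ∧ d = 2 * T - 1 - 2 * k := by
  by_cases h0 : d = 0
  · exact .inl ⟨by rw [edgePath, dif_pos h0], h0⟩
  by_cases hT : 2 * T + 1 ≤ d
  · exact .inr (.inl ⟨edgePath_of_le e hT, by omega⟩)
  by_cases h2 : d % 2 = 0
  · refine .inr (.inr (.inl ⟨⟨d / 2 - 1, by omega⟩, ?_, by simp; omega⟩))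
    rw [edgePath, dif_neg h0, dif_neg hT, if_pos h2]
  · refine .inr (.inr (.inr ⟨⟨(2 * T - 1 - d) / 2, by omega⟩, ?_, by simp; omega⟩))
    rw [edgePath, dif_neg h0, dif_neg hT, if_neg h2]

theorem edgePath_adj {T d : ℕ} (e : G.Arc) (hd : d < 2 * T + 1) :
    (G.subdiv T).Adj (edgePath T e d) (edgePath T e (d + 1)) := by
  rcases edgePath_cases e (T := T) (d := d) (by omega)
    with ⟨h, h₀⟩ | ⟨h, h₀⟩ | ⟨k, h, h₀⟩ | ⟨k, h, h₀⟩ <;>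
  rcases edgePath_cases e (T := T) (d := d + 1) (by omega)
    with ⟨h', h₁⟩ | ⟨h', h₁⟩ | ⟨l, h', h₁⟩ | ⟨l, h', h₁⟩ <;>
  rw [h, h'] <;> simp [subdiv, Arc.reverse, e.2] <;> omega

theorem edgePath_walkLen {T a d : ℕ} (e : G.Arc) (h : a + d ≤ 2 * T + 1) :
    (G.subdiv T).walkLen d (edgePath T e a) (edgePath T e (a + d)) :=
  walkLen_of_adj_succ _ a d fun _ _ hj => edgePath_adj e (by omega)

theorem edgePath_reverse {T d d' : ℕ} (e : G.Arc) (hdd : d + d' = 2 * T + 1) :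
    edgePath T e.reverse d = edgePath T e d' := by
  rcases edgePath_cases e.reverse (T := T) (d := d) (by omega)
    with ⟨h, h₀⟩ | ⟨h, h₀⟩ | ⟨k, h, h₀⟩ | ⟨k, h, h₀⟩ <;>
  rcases edgePath_cases e (T := T) (d := d') (by omega)
    with ⟨h', h₁⟩ | ⟨h', h₁⟩ | ⟨l, h', h₁⟩ | ⟨l, h', h₁⟩ <;>
  rw [h, h'] <;> simp [Fin.ext_iff] <;> omega

theorem subdiv_homTo_of_arcWalks (q : ℕ) (f : H.V → K.V) (W : H.Arc → ℕ → K.V)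
    (hend : ∀ e, W e (2 * q + 1) = f e.1.2)
    (hstep : ∀ e d, d < 2 * q + 1 → K.Adj (W e d) (W e (d + 1)))
    (hrev : ∀ e d, d ≤ 2 * q + 1 → W e.reverse d = W e (2 * q + 1 - d)) :
    (H.subdiv q).homTo K := by
  have hstart : ∀ e, W e 0 = f e.1.1 := fun e => by
    rw [← Nat.sub_self (2 * q + 1), ← hrev e _ le_rfl, hend]
    rfl
  refine ⟨fun | .inl a => f a | .inr (e, k) => W e (2 * k + 2), ?_⟩
  rintro (a | ⟨e, k⟩) (b | ⟨e', l⟩) hab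
  · obtain ⟨rfl, hab⟩ := hab
    simpa [hstart, hend] using hstep ⟨(a, b), hab⟩ 0 (by omega)
  · obtain ⟨rfl, hl⟩ := hab
    have := hstep e' (2 * l + 2) (by omega)
    rw [show 2 * (l : ℕ) + 2 + 1 = 2 * q + 1 by omega, hend] at this
    exact K.symm _ _ this
  · obtain ⟨rfl, hk⟩ := hab
    have := hstep e (2 * k + 2) (by omega)
    rwa [show 2 * (k : ℕ) + 2 + 1 = 2 * q + 1 by omega, hend] at this
  · obtain ⟨h₁, h₂, hkl⟩ := hab
    obtain rfl : e' = Arc.reverse e := Subtype.ext (Prod.ext h₁ h₂)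
    show K.Adj (W e (2 * k + 2)) (W (Arc.reverse e) (2 * l + 2))
    rw [hrev e _ (by omega)]
    rcases hkl with hkl | hkl
    · rw [show 2 * q + 1 - (2 * l + 2) = 2 * k + 2 + 1 by omega]
      exact hstep e _ (by omega)
    · rw [show 2 * q + 1 - (2 * l + 2) = 2 * k + 1 by omega]
      exact K.symm _ _ (hstep e _ (by omega))

theorem subdiv_homTo_subdiv_pow (s q : ℕ) :
    (G.subdiv s).homTo ((G.subdiv (2 * s * q + s + q)).pow (2 * q + 1)) := by
  have hT : 2 * (2 * s * q + s + q) + 1 = (2 * q + 1) * (2 * s + 1) := by ring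
  refine subdiv_homTo_of_arcWalks s Sum.inl (fun e d => edgePath _ e ((2 * q + 1) * d)) ?_ ?_ ?_
  · exact fun e => edgePath_of_le e hT.le
  · intro e d hd
    rw [Nat.mul_succ]
    exact edgePath_walkLen e (by rw [← Nat.mul_succ, hT]; exact Nat.mul_le_mul_left _ hd)
  · intro e d hd
    exact edgePath_reverse e (by rw [← Nat.mul_add, Nat.add_sub_cancel' hd, hT])

theorem subdiv_homTo_of_homTo_pow (q : ℕ) (hH : ∀ a, ¬ H.Adj a a)
    (h : H.homTo (K.pow (2 * q + 1))) : (H.subdiv q).homTo K := by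
  obtain ⟨f, hf⟩ : ∃ f : H.V → K.V, ∀ u v, H.Adj u v → K.walkLen (2 * q + 1) (f u) (f v) := h
  choose g hg₀ hgend hgadj using fun e : H.Arc => exists_adj_succ_of_walkLen (hf _ _ e.2)
  let : LinearOrder H.V := IsWellOrder.linearOrder WellOrderingRel
  -- Both arcs of an edge follow the walk chosen for the arc from its smaller to its larger end;
  -- a loop would have to be traversed by a palindromic walk.
  refine subdiv_homTo_of_arcWalks q f
    (fun e d => if e.1.1 < e.1.2 then g e d else g e.reverse (2 * q + 1 - d)) ?_ ?_ ?_
  · intro e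
    split_ifs
    · exact hgend e
    · rw [Nat.sub_self, hg₀]
      rfl
  · intro e d hd
    split_ifs
    · exact hgadj e d hd
    · have := hgadj e.reverse (2 * q - d) (by omega)
      rw [show 2 * q - d + 1 = 2 * q + 1 - d by omega] at this
      rw [show 2 * q + 1 - (d + 1) = 2 * q - d by omega]
      exact K.symm _ _ this
  · intro e d hd
    have hne : e.1.1 ≠ e.1.2 := fun h => hH e.1.2 (h ▸ e.2)
    rcases hne.lt_or_gt with hlt | hgt
    · simp [hlt, hlt.not_gt]
    · simp [hgt, hgt.not_gt, Nat.sub_sub_self hd]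

/-- `a` is an end of the subdivided arc through `x`, at distance `d` from `x`. -/
def IsArcEnd (s : ℕ) : (G.subdiv s).V → G.V → ℕ → Prop
  | .inl u, a, d => a = u ∧ d = 0
  | .inr (e, k), a, d => a = e.1.1 ∧ d = 2 * k + 2 ∨ a = e.1.2 ∧ d = 2 * s - 1 - 2 * k

theorem exists_walkLen_of_subdiv_walkLen {s : ℕ} {u' : G.V} :
    ∀ {m : ℕ} {x : (G.subdiv s).V}, (G.subdiv s).walkLen m x (.inl u') →
      ∃ a d n c, G.IsArcEnd s x a d ∧ G.walkLen n a u' ∧ m = d + (2 * s + 1) * n + 2 * c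
  | 0, _, rfl => ⟨u', 0, 0, 0, ⟨rfl, rfl⟩, rfl, rfl⟩
  | m + 1, x, ⟨y, hxy, hy⟩ => by
    obtain ⟨a, d, n, c, had, han, rfl⟩ := exists_walkLen_of_subdiv_walkLen hy
    have hn : (2 * s + 1) * (n + 1) = (2 * s + 1) * n + (2 * s + 1) := Nat.mul_succ _ _
    rcases x with u | ⟨e, k⟩ <;> rcases y with v | ⟨e', l⟩
    · obtain ⟨hs, huv⟩ := hxy
      obtain ⟨rfl, rfl⟩ := had
      exact ⟨u, 0, n + 1, c, ⟨rfl, rfl⟩, ⟨a, huv, han⟩, by subst hs; omega⟩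
    · obtain ⟨rfl, hl⟩ := hxy
      rcases had with ⟨rfl, rfl⟩ | ⟨rfl, rfl⟩
      · exact ⟨e'.1.2, 0, n + 1, c, ⟨rfl, rfl⟩, ⟨_, G.symm _ _ e'.2, han⟩, by omega⟩
      · exact ⟨e'.1.2, 0, n, c + 1, ⟨rfl, rfl⟩, han, by omega⟩
    · obtain ⟨rfl, hk⟩ := hxy
      obtain ⟨rfl, rfl⟩ := had
      exact ⟨_, _, n, c, .inr ⟨rfl, rfl⟩, han, by omega⟩
    · obtain ⟨h₁, h₂, hkl⟩ := hxy
      rcases had with ⟨rfl, rfl⟩ | ⟨rfl, rfl⟩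
      · exact ⟨_, _, n, c + (k + l + 2 - s), .inr ⟨h₁, rfl⟩, han, by omega⟩
      · exact ⟨_, _, n, c + (s - (k + l + 1)), .inl ⟨h₂, rfl⟩, han, by omega⟩

theorem subdiv_walkLen_inr_cases {s : ℕ} :
    ∀ {m : ℕ} {e : G.Arc} {k : Fin s} {y : (G.subdiv s).V},
      (G.subdiv s).walkLen m (.inr (e, k)) y →
      (∃ i ≤ m, ∃ w, (G.subdiv s).walkLen i (.inr (e, k)) (.inl w) ∧
        (G.subdiv s).walkLen (m - i) (.inl w) y) ∨
      ∃ e' k', y = .inr (e', k') ∧ e'.1 = Prod.swap^[m] e.1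
  | 0, e, k, _, h => .inr ⟨e, k, h.symm, rfl⟩
  | m + 1, e, k, y, ⟨.inl w, hadj, hy⟩ => .inl ⟨1, by omega, w, ⟨_, hadj, rfl⟩, hy⟩
  | m + 1, e, k, y, ⟨.inr (e₁, k₁), hadj, hy⟩ => by
    rcases subdiv_walkLen_inr_cases hy with ⟨i, hi, w, hw, hwy⟩ | ⟨e', k', rfl, he'⟩
    · exact .inl ⟨i + 1, by omega, w, ⟨_, hadj, hw⟩, by rwa [Nat.add_sub_add_right]⟩
    · refine .inr ⟨e', k', rfl, ?_⟩
      rw [he', Function.iterate_succ_apply]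
      exact congrArg _ (Prod.ext hadj.1 hadj.2.1)

theorem exists_inl_walkLen_self_of_odd {s : ℕ} (hG : ∀ x, ¬ G.Adj x x) {m : ℕ} (hm : Odd m)
    {z : (G.subdiv s).V} (hz : (G.subdiv s).walkLen m z z) :
    ∃ w, (G.subdiv s).walkLen m (.inl w) (.inl w) := by
  rcases z with u | ⟨e, k⟩
  · exact ⟨u, hz⟩
  rcases subdiv_walkLen_inr_cases hz with ⟨i, hi, w, hzw, hwz⟩ | ⟨e', k', he, he'⟩
  · exact ⟨w, Nat.sub_add_cancel hi ▸ walkLen_add.2 ⟨_, hwz, hzw⟩⟩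
  · obtain ⟨rfl, rfl⟩ := Prod.mk.inj (Sum.inr.inj he)
    rw [Function.Involutive.iterate_odd Prod.swap_swap hm] at he'
    exact (hG _ (congrArg Prod.fst he' ▸ e.2)).elim

theorem subdiv_pow_not_adj_self (hG : ∀ x, ¬ G.Adj x x) {r s : ℕ}
    (h : G.ltOddGirth ((2 * r + 1) / (2 * s + 1))) (z : (G.subdiv s).V) :
    ¬ ((G.subdiv s).pow (2 * r + 1)).Adj z z := by
  intro hz
  obtain ⟨w, hw⟩ := exists_inl_walkLen_self_of_odd hG (odd_two_mul_add_one r) hz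
  obtain ⟨a, d, n, c, ⟨rfl, rfl⟩, hn, hlen⟩ := exists_walkLen_of_subdiv_walkLen hw
  have hodd : Odd n := (Nat.odd_mul (m := 2 * s + 1)).1 (Nat.odd_iff.2 (by omega)) |>.2
  have hlt := h n hodd ⟨_, hn⟩
  rw [div_lt_iff₀ (by positivity)] at hlt
  have : 2 * r + 1 < (2 * s + 1) * n := by
    rw [Nat.mul_comm (2 * s + 1)]
    exact_mod_cast hlt
  omega

end OGraph

theorem fracPow_fracPow_hom_general (G : OGraph) (r s p q : ℕ)
    (h1 : G.ltOddGirth ((2 * (r : ℚ) + 1) / (2 * (s : ℚ) + 1))) :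
    ((((G.subdiv s).pow (2 * r + 1)).subdiv q).pow (2 * p + 1)).homTo
      ((G.subdiv (2 * s * q + s + q)).pow ((2 * r + 1) * (2 * p + 1))) := by
  by_cases hloop : ∃ x, G.Adj x x
  · obtain ⟨x, hx⟩ := hloop
    obtain ⟨z, hz⟩ := exists_subdiv_adj_self hx (2 * s * q + s + q)
    exact homTo_of_adj_self (pow_adj_self hz _)
  have hH : ((G.subdiv s).pow (2 * r + 1)).homTo
      (((G.subdiv (2 * s * q + s + q)).pow (2 * r + 1)).pow (2 * q + 1)) :=
    ((subdiv_homTo_subdiv_pow s q).pow (2 * r + 1)).trans (pow_pow_homTo_pow_pow _ _)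
  exact ((subdiv_homTo_of_homTo_pow q (subdiv_pow_not_adj_self (not_exists.1 hloop) h1) hH).pow
    (2 * p + 1)).trans (pow_pow_homTo _ _)

/-- If `(2r+1)/(2s+1) < og(G)` and `(2r+1)(2p+1)/((2s+1)(2q+1)) < og(G)`,
then `(G^{(2r+1)/(2s+1)})^{(2p+1)/(2q+1)} → G^{(2r+1)(2p+1)/((2s+1)(2q+1))}`.
(Note `(2s+1)(2q+1) = 2(2sq+s+q)+1`.) -/
theorem fracPow_fracPow_hom (G : OGraph) (hG : G.Nonbipartite) (r s p q : ℕ)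
    (h1 : G.ltOddGirth ((2 * (r : ℚ) + 1) / (2 * (s : ℚ) + 1)))
    (h2 : G.ltOddGirth ((2 * (r : ℚ) + 1) * (2 * (p : ℚ) + 1) /
      ((2 * (s : ℚ) + 1) * (2 * (q : ℚ) + 1)))) :
    ((((G.subdiv s).pow (2 * r + 1)).subdiv q).pow (2 * p + 1)).homTo
      ((G.subdiv (2 * s * q + s + q)).pow ((2 * r + 1) * (2 * p + 1))) :=
  fracPow_fracPow_hom_general G r s p q h1
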